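/- arXiv:2002.05757 — 7 statements merged into one kernel-verified Lean document; each statement's English description precedes it below -/
import Mathlib

section
/- Let L be a full lattice in a finite-dimensional real inner product space V and W ⊆ V a subspace. Then W is spanned by W ∩ L if and only if the orthogonal projection P_{W⊥}(L) of L onto the orthogonal complement of W is a discrete subgroup of W⊥. -/
/-!
Put `M = W ∩ L` and `Λ = P_{W⊥}(L)`. Rank–nullity for `P_{W⊥}` restricted to `L` gives
`rank M + rank Λ = rank L = dim V = dim W + dim W⊥`. For a discrete subgroup the `ℤ`-rank equals
the dimension of its real span, so `span M = W ↔ rank M = dim W`; and a finitely generated subgroup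
spanning `W⊥` is discrete exactly when its `ℤ`-rank is `dim W⊥`, since then a `ℤ`-basis of it is an
`ℝ`-basis. Hence both sides of the equivalence say `rank Λ = dim W⊥`.
-/

open Module Submodule

universe u

theorem Submodule.finrank_map_add_finrank_inf_ker {R : Type*} {M : Type u} {N : Type*} [Ring R]
    [StrongRankCondition R] [HasRankNullity.{u} R]
    [AddCommGroup M] [Module R M] [AddCommGroup N] [Module R N]
    (f : M →ₗ[R] N) (L : Submodule R M) [Module.Finite R L] :
    finrank R (L.map f) + finrank R ↥(L ⊓ LinearMap.ker f) = finrank R L := by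
  have hker : LinearMap.ker (f.domRestrict L) = (L ⊓ LinearMap.ker f).comap L.subtype := by
    rw [LinearMap.ker_domRestrict, comap_inf, comap_subtype_self, top_inf_eq]
  rw [← LinearMap.range_domRestrict, ← (f.domRestrict L).quotKerEquivRange.finrank_eq, hker,
    ← (comapSubtypeEquivOfLe inf_le_left).finrank_eq]
  exact Submodule.finrank_quotient_add_finrank _

section

variable {E : Type*} [NormedAddCommGroup E] [NormedSpace ℝ E]

theorem discreteTopology_of_span_eq_top_of_finrank_eq (L : Submodule ℤ E) [Module.Finite ℤ L]
    (hspan : span ℝ (L : Set E) = ⊤) (hrank : finrank ℤ L = finrank ℝ E) :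
    DiscreteTopology L := by
  have : Module ℚ E := Module.compHom E (algebraMap ℚ ℝ)
  have : IsAddTorsionFree E := .of_module_rat E
  let b := Module.Free.chooseBasis ℤ L
  have hspanZ : span ℤ (Set.range ((↑) ∘ b : _ → E)) = L := by
    rw [Set.range_comp, ← L.coe_subtype, ← map_span, b.span_eq, Submodule.map_top, range_subtype]
  have hcard : Fintype.card (Module.Free.ChooseBasisIndex ℤ L) = finrank ℝ E := by
    rw [← hrank, finrank_eq_card_chooseBasisIndex]
  have htop : ⊤ ≤ span ℝ (Set.range ((↑) ∘ b : _ → E)) := by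
    rw [← span_span_of_tower ℤ, hspanZ, hspan]
  rw [← hspanZ, ← coe_basisOfTopLeSpanOfCardEqFinrank _ htop hcard]
  infer_instance

variable [FiniteDimensional ℝ E]

theorem finrank_int_eq_finrank_span_of_discreteTopology (L : Submodule ℤ E) [DiscreteTopology L] :
    finrank ℤ L = finrank ℝ (span ℝ (L : Set E)) := by
  have := Real.finrank_eq_int_finrank_of_discrete (s := (L : Set E)) (by rwa [span_eq])
  rw [Set.finrank, Set.finrank, span_eq] at this
  exact this.symm

theorem discreteTopology_iff_finrank_int_eq (L : Submodule ℤ E) [Module.Finite ℤ L]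
    (hspan : span ℝ (L : Set E) = ⊤) : DiscreteTopology L ↔ finrank ℤ L = finrank ℝ E :=
  ⟨fun _ ↦ by rw [finrank_int_eq_finrank_span_of_discreteTopology, hspan, finrank_top],
    discreteTopology_of_span_eq_top_of_finrank_eq L hspan⟩

theorem span_eq_iff_finrank_int_eq (L : Submodule ℤ E) [DiscreteTopology L] {W : Submodule ℝ E}
    (hLW : (L : Set E) ⊆ W) : span ℝ (L : Set E) = W ↔ finrank ℤ L = finrank ℝ W := by
  rw [finrank_int_eq_finrank_span_of_discreteTopology]
  exact ⟨fun h ↦ h ▸ rfl, eq_of_le_of_finrank_eq (span_le.mpr hLW)⟩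

theorem ZLattice.span_inter_ker_eq_ker_iff_discreteTopology_map {F : Type*} [NormedAddCommGroup F]
    [NormedSpace ℝ F] [FiniteDimensional ℝ F] (L : Submodule ℤ E) [DiscreteTopology L]
    [IsZLattice ℝ L] (f : E →ₗ[ℝ] F) (hf : Function.Surjective f) :
    span ℝ ((LinearMap.ker f : Set E) ∩ L) = LinearMap.ker f ↔
      DiscreteTopology (L.map (f.restrictScalars ℤ)) := by
  have : Module.Finite ℤ L := ZLattice.module_finite ℝ L
  let M := L ⊓ LinearMap.ker (f.restrictScalars ℤ)
  have hM : (M : Set E) = (LinearMap.ker f : Set E) ∩ L := Set.inter_comm _ _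
  have : DiscreteTopology M := .of_subset ‹DiscreteTopology L› inf_le_left
  have hspan : span ℝ (L.map (f.restrictScalars ℤ) : Set F) = ⊤ := by
    rw [map_coe, LinearMap.coe_restrictScalars, ← map_span, IsZLattice.span_top, Submodule.map_top,
      LinearMap.range_eq_top.mpr hf]
  have hrank : finrank ℤ (L.map (f.restrictScalars ℤ)) + finrank ℤ M = finrank ℝ E := by
    rw [← ZLattice.rank ℝ L]
    exact Submodule.finrank_map_add_finrank_inf_ker (f.restrictScalars ℤ) L
  have hdim := f.finrank_range_add_finrank_ker
  rw [LinearMap.range_eq_top.mpr hf, finrank_top] at hdim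
  rw [← hM, span_eq_iff_finrank_int_eq M fun _ hx ↦ hx.2,
    discreteTopology_iff_finrank_int_eq _ hspan]
  omega

end

/-- For a full lattice L in a finite-dimensional real inner product space V and a
subspace W, W is spanned by W ∩ L iff the orthogonal projection of L onto W⊥ is a
discrete subgroup of W⊥. -/
theorem stmt_3 {V : Type*} [NormedAddCommGroup V] [InnerProductSpace ℝ V]
    [FiniteDimensional ℝ V] (L : AddSubgroup V)
    (hL : ∃ b : Module.Basis (Fin (Module.finrank ℝ V)) ℝ V,
      AddSubgroup.closure (Set.range ⇑b) = L)
    (W : Submodule ℝ V) :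
    Submodule.span ℝ ((W : Set V) ∩ (L : Set V)) = W ↔
      DiscreteTopology
        (AddSubgroup.map (Wᗮ.orthogonalProjectionOnto).toLinearMap.toAddMonoidHom L) := by
  obtain ⟨b, rfl⟩ := hL
  have hker : LinearMap.ker (Wᗮ.orthogonalProjectionOnto : V →ₗ[ℝ] Wᗮ) = W := by
    rw [ker_orthogonalProjectionOnto, orthogonal_orthogonal]
  have hsurj : Function.Surjective Wᗮ.orthogonalProjectionOnto := fun y ↦
    ⟨y, orthogonalProjectionOnto_mem_subspace_eq_self y⟩
  rw [← span_int_eq_addSubgroupClosure]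
  have key := ZLattice.span_inter_ker_eq_ker_iff_discreteTopology_map (span ℤ (Set.range b))
    (Wᗮ.orthogonalProjectionOnto : V →ₗ[ℝ] Wᗮ) hsurj
  rwa [hker] at key
end

section
/- Let L be a full lattice in a finite-dimensional real vector space V. A subspace W ⊆ V is L-generated if and only if the image of W under the quotient map V → V/L is closed (equivalently, compact). -/
/-!
If `W ∩ L` spans `W`, it is a full lattice in `W`, so `W` is covered by the `W ∩ L`-translates of
a compact fundamental parallelepiped and the image of `W` in `V ⧸ L` is compact.

Conversely, if the image of `W` is closed, it is a compact group, and the surjection from `W` onto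
it is open by the open mapping theorem for σ-compact groups. Finitely many of the images of the
balls of radius `n` cover it, so every point of `W` lies within a fixed distance `C` of `W ∩ L`.
A subspace within bounded distance of the closed subspace `span ℝ (W ∩ L)` is contained in it,
since rescaling shrinks the distance to `0`.
-/

open Submodule

theorem Submodule.le_of_forall_exists_norm_sub_lt {𝕜 E : Type*} [NontriviallyNormedField 𝕜]
    [SeminormedAddCommGroup E] [NormedSpace 𝕜 E] {S W : Submodule 𝕜 E}
    (hS : IsClosed (S : Set E)) {C : ℝ} (h : ∀ w ∈ W, ∃ s ∈ S, ‖w - s‖ < C) : W ≤ S := by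
  intro w hw
  rw [← SetLike.mem_coe, ← hS.closure_eq, Metric.mem_closure_iff]
  intro ε hε
  obtain ⟨c, hc⟩ := NormedField.exists_lt_norm 𝕜 (C / ε)
  obtain ⟨s, hs, hcs⟩ := h (c • w) (W.smul_mem c hw)
  have hc0 : 0 < ‖c‖ := (div_pos ((norm_nonneg _).trans_lt hcs) hε).trans hc
  refine ⟨c⁻¹ • s, S.smul_mem _ hs, ?_⟩
  calc dist w (c⁻¹ • s) = ‖c‖⁻¹ * ‖c • w - s‖ := by
        rw [dist_eq_norm, ← norm_inv, ← norm_smul, smul_sub, inv_smul_smul₀ (norm_pos_iff.1 hc0)]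
    _ < ‖c‖⁻¹ * C := by gcongr
    _ < ε := by
        rw [inv_mul_lt_iff₀ hc0]
        rwa [div_lt_iff₀ hε] at hc

theorem AddMonoidHom.exists_forall_norm_sub_lt_of_compactSpace {E H : Type*}
    [SeminormedAddCommGroup E] [SigmaCompactSpace E] [AddCommGroup H] [TopologicalSpace H]
    [IsTopologicalAddGroup H] [CompactSpace H] [T2Space H] (f : E →+ H)
    (hf : Function.Surjective f) (hcont : Continuous f) :
    ∃ C : ℝ, ∀ x, ∃ y, f y = 0 ∧ ‖x - y‖ < C := by
  have hopen := f.isOpenMap_of_sigmaCompact hf hcont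
  have hcover : Set.univ ⊆ ⋃ n : ℕ, f '' Metric.ball 0 n := fun y _ ↦ by
    obtain ⟨x, rfl⟩ := hf y
    obtain ⟨n, hn⟩ := exists_nat_gt ‖x‖
    exact Set.mem_iUnion.2 ⟨n, x, by simpa using hn, rfl⟩
  have hmono : Monotone fun n : ℕ ↦ f '' Metric.ball 0 n := fun m n hmn ↦
    Set.image_mono (Metric.ball_subset_ball (by exact_mod_cast hmn))
  obtain ⟨n, hn⟩ := isCompact_univ.elim_directed_cover _
    (fun n ↦ hopen _ Metric.isOpen_ball) hcover hmono.directed_le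
  refine ⟨n, fun x ↦ ?_⟩
  obtain ⟨v, hv, hfv⟩ := hn (Set.mem_univ (f x))
  exact ⟨x - v, by rw [map_sub, hfv, sub_self], by simpa using hv⟩

namespace ZLattice

variable {E : Type*} [NormedAddCommGroup E] [NormedSpace ℝ E] [FiniteDimensional ℝ E]

theorem compactSpace_quotient (L : Submodule ℤ E) [DiscreteTopology L] [IsZLattice ℝ L] :
    CompactSpace (E ⧸ L.toAddSubgroup) := by
  refine ⟨?_⟩
  rw [← QuotientAddGroup.mk_surjective.range_eq]
  exact IsZLattice.isCompact_range_of_periodic L _ continuous_quotient_mk' fun z w hw ↦ by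
    simpa using hw

theorem isCompact_image_mk_of_span_inter_eq (L : Submodule ℤ E) [DiscreteTopology L]
    (W : Submodule ℝ E) (hW : span ℝ ((W : Set E) ∩ L) = W) :
    IsCompact (QuotientAddGroup.mk' L.toAddSubgroup '' W) := by
  let M := ZLattice.comap ℝ L W.subtype
  have : DiscreteTopology M :=
    comap_discreteTopology ℝ L continuous_subtype_val W.injective_subtype
  have : IsZLattice ℝ M := ⟨by
    have hpre : (M : Set W) = W.subtype ⁻¹' ((W : Set E) ∩ L) := by ext; simp [M]
    have hne : ((W : Set E) ∩ L).Nonempty := ⟨0, W.zero_mem, L.zero_mem⟩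
    rw [hpre, span_preimage_eq hne (by simp), hW, comap_subtype_self]⟩
  have hcpt := IsZLattice.isCompact_range_of_periodic M
    (QuotientAddGroup.mk' L.toAddSubgroup ∘ W.subtype)
    (continuous_quotient_mk'.comp continuous_subtype_val) fun z w hw ↦ by
      have hwL : (w : E) ∈ L := hw
      simpa [QuotientAddGroup.eq_iff_sub_mem] using hwL
  rwa [Set.range_comp, coe_subtype, Subtype.range_coe] at hcpt

theorem span_inter_eq_of_isClosed_image_mk (L : Submodule ℤ E) [DiscreteTopology L]
    [IsZLattice ℝ L] (W : Submodule ℝ E)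
    (hW : IsClosed (QuotientAddGroup.mk' L.toAddSubgroup '' W)) :
    span ℝ ((W : Set E) ∩ L) = W := by
  have : CompactSpace (E ⧸ L.toAddSubgroup) := compactSpace_quotient L
  have : IsClosed (L.toAddSubgroup : Set E) := AddSubgroup.isClosed_of_discrete
  let H := W.toAddSubgroup.map (QuotientAddGroup.mk' L.toAddSubgroup)
  have : CompactSpace H := isCompact_iff_compactSpace.mp hW.isCompact
  let f : W →+ H :=
    ((QuotientAddGroup.mk' L.toAddSubgroup).comp W.toAddSubgroup.subtype).codRestrict H
      fun w ↦ ⟨w, w.2, rfl⟩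
  have hf : Function.Surjective f := by
    rintro ⟨_, w, hw, rfl⟩
    exact ⟨⟨w, hw⟩, rfl⟩
  obtain ⟨C, hC⟩ := f.exists_forall_norm_sub_lt_of_compactSpace hf
    ((continuous_quotient_mk'.comp continuous_subtype_val).subtype_mk _)
  refine le_antisymm (span_le.2 Set.inter_subset_left) <|
    le_of_forall_exists_norm_sub_lt (C := C) (closed_of_finiteDimensional _) fun w hw ↦ ?_
  obtain ⟨l, hl, hwl⟩ := hC ⟨w, hw⟩
  have hlL : ((l : E) : E ⧸ L.toAddSubgroup) = 0 := congrArg Subtype.val hl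
  rw [QuotientAddGroup.eq_zero_iff] at hlL
  exact ⟨l, subset_span ⟨l.2, hlL⟩, hwl⟩

end ZLattice

/-- For a full lattice L in a finite-dimensional real vector space V, a subspace W is
L-generated iff the image of W in the quotient torus V/L is closed. -/
theorem stmt_4 {V : Type*} [NormedAddCommGroup V] [NormedSpace ℝ V]
    [FiniteDimensional ℝ V] (L : AddSubgroup V)
    (hL : ∃ b : Module.Basis (Fin (Module.finrank ℝ V)) ℝ V,
      AddSubgroup.closure (Set.range ⇑b) = L)
    (W : Submodule ℝ V) :
    Submodule.span ℝ ((W : Set V) ∩ (L : Set V)) = W ↔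
      IsClosed ((QuotientAddGroup.mk' L) '' (W : Set V)) := by
  obtain ⟨b, rfl⟩ := hL
  rw [← span_int_eq_addSubgroupClosure]
  have : IsClosed ((span ℤ (Set.range b)).toAddSubgroup : Set V) :=
    AddSubgroup.isClosed_of_discrete
  exact ⟨fun h ↦ (ZLattice.isCompact_image_mk_of_span_inter_eq _ W h).isClosed,
    ZLattice.span_inter_eq_of_isClosed_image_mk _ W⟩
end

section
/- Let G be a finitely generated subgroup of a real vector space V and W ⊆ V a linear subspace. Then G ∩ W is a direct summand of G as an abelian group. -/
/-!
`G ∩ W` is the kernel of the map `G → V ⧸ W`. Its image is a finitely generated subgroup of a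
vector space over a field of characteristic zero, hence torsion-free and therefore free abelian,
so the surjection of `G` onto the image splits; the image of a splitting is the complement.
-/

open Submodule LinearMap
open AddSubgroup (toIntSubmodule)

theorem LinearMap.exists_isCompl_ker_of_projective_range {R M N : Type*} [Ring R]
    [AddCommGroup M] [Module R M] [AddCommGroup N] [Module R N] (f : M →ₗ[R] N)
    [Module.Projective R (range f)] : ∃ C : Submodule R M, IsCompl (ker f) C := by
  obtain ⟨g, hg⟩ := f.rangeRestrict.exists_rightInverse_of_surjective f.range_rangeRestrict
  have hidem : IsIdempotentElem (g ∘ₗ f.rangeRestrict) := by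
    rw [IsIdempotentElem, Module.End.mul_eq_comp, comp_assoc, ← comp_assoc f.rangeRestrict, hg,
      id_comp]
  have hker : ker (g ∘ₗ f.rangeRestrict) = ker f := by
    rw [ker_comp, ker_eq_bot_of_inverse hg, comap_bot, ker_rangeRestrict]
  exact ⟨_, hker ▸ hidem.isCompl.symm⟩

theorem Submodule.inf_sup_map_subtype_eq_and_inf_inf_map_subtype_eq_bot {R M : Type*} [Ring R]
    [AddCommGroup M] [Module R M] {P Q : Submodule R M} {C : Submodule R P}
    (h : IsCompl (Q.comap P.subtype) C) :
    (P ⊓ Q) ⊔ C.map P.subtype = P ∧ (P ⊓ Q) ⊓ C.map P.subtype = ⊥ := by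
  rw [← map_comap_subtype, ← map_sup, h.sup_eq_top, map_subtype_top,
    ← map_inf _ P.injective_subtype, h.inf_eq_bot, Submodule.map_bot]
  exact ⟨rfl, rfl⟩

theorem Submodule.FG.exists_complement_inf_ker {R M N : Type*} [CommRing R] [IsDomain R]
    [IsPrincipalIdealRing R] [AddCommGroup M] [Module R M] [AddCommGroup N] [Module R N]
    [Module.IsTorsionFree R N] {P : Submodule R M} (hP : P.FG) (f : M →ₗ[R] N) :
    ∃ C ≤ P, (P ⊓ ker f) ⊔ C = P ∧ (P ⊓ ker f) ⊓ C = ⊥ := by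
  have : Module.Finite R P := Module.Finite.iff_fg.mpr hP
  obtain ⟨C, hC⟩ := (f ∘ₗ P.subtype).exists_isCompl_ker_of_projective_range
  rw [ker_comp] at hC
  exact ⟨C.map P.subtype, map_subtype_le P C,
    inf_sup_map_subtype_eq_and_inf_inf_map_subtype_eq_bot hC⟩

/-- If G is a finitely generated subgroup of a real vector space V and W ⊆ V is a
linear subspace, then G ∩ W is a direct summand of G. -/
theorem stmt_7 {V : Type*} [AddCommGroup V] [Module ℝ V]
    (G : AddSubgroup V) (hG : G.FG) (W : Submodule ℝ V) :
    ∃ G'' : AddSubgroup V, G'' ≤ G ∧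
      (G ⊓ W.toAddSubgroup) ⊔ G'' = G ∧ (G ⊓ W.toAddSubgroup) ⊓ G'' = ⊥ := by
  have : Module.IsTorsionFree ℤ (V ⧸ W) := .trans ℝ
  have hker : ker (W.mkQ.restrictScalars ℤ) = toIntSubmodule W.toAddSubgroup := by
    rw [ker_restrictScalars, ker_mkQ]
    rfl
  obtain ⟨C, hCG, hsup, hinf⟩ := ((fg_iff_addSubgroup_fg (toIntSubmodule G)).mpr hG)
    |>.exists_complement_inf_ker (W.mkQ.restrictScalars ℤ)
  obtain ⟨G'', rfl⟩ := toIntSubmodule.surjective C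
  rw [hker, ← OrderIso.map_inf, ← OrderIso.map_sup, toIntSubmodule.injective.eq_iff] at hsup
  rw [hker, ← OrderIso.map_inf, ← OrderIso.map_inf, ← OrderIso.map_bot toIntSubmodule,
    toIntSubmodule.injective.eq_iff] at hinf
  exact ⟨G'', toIntSubmodule.le_iff_le.mp hCG, hsup, hinf⟩
end

section
/- Let H ⊆ GL(V) be a finite group, L an H-invariant full lattice in V, and W ⊆ V an H-invariant L-generated subspace. Then there exists a complement W' of W in V that is both L-generated and H-invariant. -/
/-!
Since `W` is spanned by lattice vectors, `W ∩ L` is a saturated sublattice of `L`: the quotient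
`L ⧸ (W ∩ L)` is a finitely generated torsion-free abelian group, hence free, so `W ∩ L` is a
direct summand of `L`. The projection onto this summand extends to a linear projection `q` of `V`
onto `W` with `q L ⊆ L`. Summing the conjugates `h q h⁻¹` over `H` gives an `H`-equivariant map
`p` with `p L ⊆ L` that acts on `W` as multiplication by `|H|`. Its kernel `W'` is an `H`-invariant
complement of `W`, and `W' = range (|H| - p)` is spanned by the lattice vectors `(|H| - p) l`.
-/

open Set Submodule

theorem Submodule.exists_retraction_of_projective_quotient {R M : Type*} [Ring R]
    [AddCommGroup M] [Module R M] (N : Submodule R M) [Module.Projective R (M ⧸ N)] :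
    ∃ f : M →ₗ[R] M, (∀ x, f x ∈ N) ∧ ∀ x ∈ N, f x = x := by
  obtain ⟨s, hs⟩ := N.mkQ.exists_rightInverse_of_surjective N.range_mkQ
  refine ⟨LinearMap.id - s ∘ₗ N.mkQ, fun x => ?_, fun x hx => ?_⟩
  · have hsx : N.mkQ (s (N.mkQ x)) = N.mkQ x := LinearMap.congr_fun hs _
    rw [← Submodule.Quotient.mk_eq_zero, ← N.mkQ_apply]
    simp only [LinearMap.sub_apply, LinearMap.id_apply, LinearMap.comp_apply, map_sub, hsx,
      sub_self]
  · simp [(Submodule.Quotient.mk_eq_zero N).mpr hx]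

theorem Module.Basis.exists_linearMap_eq_on_closure {R V ι : Type*} [CommRing R]
    [AddCommGroup V] [Module R V] (b : Module.Basis ι R V)
    (f : AddSubgroup.closure (range b) →+ V) :
    ∃ g : V →ₗ[R] V, ∀ l : AddSubgroup.closure (range b), g l = f l := by
  refine ⟨b.constr R fun i => f ⟨b i, AddSubgroup.subset_closure (mem_range_self i)⟩, ?_⟩
  rintro ⟨l, hl⟩
  induction hl using AddSubgroup.closure_induction with
  | mem x hx =>
    obtain ⟨i, rfl⟩ := hx
    simp
  | zero => exact (map_zero _).trans (map_zero f).symm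
  | add x y hx hy ihx ihy =>
    rw [map_add, ihx, ihy, ← map_add]
    rfl
  | neg x hx ih =>
    rw [map_neg, ih, ← map_neg]
    rfl

section Lattice

variable {K V : Type*} [Field K] [CharZero K] [AddCommGroup V] [Module K V]

theorem Submodule.isTorsionFree_quotient_comap_subtype (W : Submodule K V) (L : AddSubgroup V) :
    Module.IsTorsionFree ℤ (L ⧸ (W.restrictScalars ℤ).comap L.subtype.toIntLinearMap) := by
  refine .of_smul_eq_zero fun r y hy => ?_
  obtain ⟨x, rfl⟩ := Submodule.mkQ_surjective _ y
  rw [← map_zsmul, Submodule.mkQ_apply, Submodule.Quotient.mk_eq_zero] at hy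
  rw [Submodule.mkQ_apply, Submodule.Quotient.mk_eq_zero]
  by_cases hr : r = 0
  · exact .inl hr
  · refine .inr ?_
    have : (r : K) • (x : V) ∈ W := by simpa [Int.cast_smul_eq_zsmul] using hy
    simpa using (W.smul_mem_iff (Int.cast_ne_zero.mpr hr)).mp this

theorem exists_projection_mapsTo_lattice {ι : Type*} [Finite ι] (b : Module.Basis ι K V)
    {L : AddSubgroup V} (hb : AddSubgroup.closure (range b) = L) {W : Submodule K V}
    (hW : span K ((W : Set V) ∩ L) = W) :
    ∃ q : V →ₗ[K] V, (∀ x, q x ∈ W) ∧ EqOn q id W ∧ MapsTo q L L := by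
  subst hb
  set L := AddSubgroup.closure (range b)
  have : Module.Finite ℤ L := Module.Finite.iff_addGroup_fg.mpr <|
    (AddGroup.fg_iff_addSubgroup_fg L).mpr ⟨(finite_range b).toFinset, by simp [L]⟩
  have := W.isTorsionFree_quotient_comap_subtype L
  obtain ⟨f, hfW, hfid⟩ := Submodule.exists_retraction_of_projective_quotient
    ((W.restrictScalars ℤ).comap L.subtype.toIntLinearMap)
  obtain ⟨q, hq⟩ := b.exists_linearMap_eq_on_closure (L.subtype.comp f.toAddMonoidHom)
  refine ⟨q, fun x => ?_, fun w hw => ?_, fun l hl => ?_⟩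
  · have hrange : LinearMap.range q ≤ W := by
      rw [LinearMap.range_eq_map, ← b.span_eq, Submodule.map_span_le]
      rintro _ ⟨i, rfl⟩
      have hbi : b i ∈ L := AddSubgroup.subset_closure (mem_range_self i)
      simpa [hq ⟨b i, hbi⟩] using hfW ⟨b i, hbi⟩
    exact hrange (LinearMap.mem_range_self q x)
  · have hfix : EqOn q (LinearMap.id (R := K)) ((W : Set V) ∩ L) := by
      rintro x ⟨hxW, hxL⟩
      simpa [hq ⟨x, hxL⟩] using congrArg Subtype.val (hfid ⟨x, hxL⟩ (by simpa using hxW))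
    rw [SetLike.mem_coe, ← hW] at hw
    exact LinearMap.eqOn_span' hfix hw
  · simp [hq ⟨l, hl⟩]

end Lattice

theorem Subgroup.image_eq_of_forall_mapsTo {R V : Type*} [Semiring R] [AddCommMonoid V]
    [Module R V] {H : Subgroup (V ≃ₗ[R] V)} {S : Set V} (hS : ∀ h ∈ H, MapsTo h S S) :
    ∀ h ∈ H, h '' S = S := fun h hh =>
  (hS h hh).image_subset.antisymm fun x hx =>
    ⟨h.symm x, hS _ (H.inv_mem hh) hx, h.apply_symm_apply x⟩

section Averaging

variable {R V : Type*} [Semiring R] [AddCommMonoid V] [Module R V]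
  {H : Subgroup (V ≃ₗ[R] V)} [Fintype H]

variable (H) in
noncomputable def conjugateSum (q : V →ₗ[R] V) : V →ₗ[R] V :=
  ∑ h : H, (h : V ≃ₗ[R] V).toLinearMap ∘ₗ q ∘ₗ (h : V ≃ₗ[R] V).symm.toLinearMap

theorem conjugateSum_apply (q : V →ₗ[R] V) (x : V) :
    conjugateSum H q x = ∑ h : H, (h : V ≃ₗ[R] V) (q ((h : V ≃ₗ[R] V).symm x)) := by
  simp [conjugateSum]

theorem conjugateSum_mapsTo {S : Set V} {T : AddSubmonoid V} (hS : ∀ h ∈ H, MapsTo h S S)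
    (hT : ∀ h ∈ H, MapsTo h T T) {q : V →ₗ[R] V} (hq : MapsTo q S T) :
    MapsTo (conjugateSum H q) S T := fun x hx => by
  rw [conjugateSum_apply]
  exact AddSubmonoid.sum_mem _ fun h _ => hT h h.2 (hq (hS _ (H.inv_mem h.2) hx))

theorem conjugateSum_apply_of_mem {W : Set V} (hW : ∀ h ∈ H, MapsTo h W W) {q : V →ₗ[R] V}
    (hq : EqOn q id W) {w : V} (hw : w ∈ W) : conjugateSum H q w = Fintype.card H • w := by
  rw [conjugateSum_apply, ← Finset.card_univ, ← Finset.sum_const]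
  refine Finset.sum_congr rfl fun h _ => ?_
  have hw' : (h : V ≃ₗ[R] V).symm w ∈ W := hW _ (H.inv_mem h.2) hw
  rw [hq hw', id, LinearEquiv.apply_symm_apply]

theorem conjugateSum_apply_apply {a : V ≃ₗ[R] V} (ha : a ∈ H) (q : V →ₗ[R] V) (x : V) :
    conjugateSum H q (a x) = a (conjugateSum H q x) := by
  rw [conjugateSum_apply, conjugateSum_apply, map_sum]
  refine Fintype.sum_equiv (Equiv.mulLeft ⟨a, ha⟩⁻¹) _ _ fun h => ?_
  simp only [← LinearEquiv.mul_apply, Equiv.coe_mulLeft, Subgroup.coe_mul, InvMemClass.coe_inv,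
    ← LinearEquiv.coe_inv, mul_inv_rev, inv_inv, mul_inv_cancel_left, EmbeddingLike.apply_eq_iff_eq]
  rfl

end Averaging

namespace LinearMap

section Complement

variable {K V : Type*} [Field K] [AddCommGroup V] [Module K V] {W : Submodule K V}
  {p : V →ₗ[K] V} {c : K}

theorem isCompl_ker_of_apply_eq_smul (hc : c ≠ 0) (hpW : ∀ x, p x ∈ W)
    (hp : ∀ w ∈ W, p w = c • w) : IsCompl W (ker p) := by
  have hker := ker_codRestrict W (c⁻¹ • p) fun x => W.smul_mem _ (hpW x)
  rw [ker_smul _ _ (inv_ne_zero hc)] at hker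
  rw [← hker]
  refine isCompl_of_proj fun w => ?_
  ext
  simp [hp w w.2, hc]

theorem ker_eq_range_smul_id_sub (hc : c ≠ 0) (hpW : ∀ x, p x ∈ W)
    (hp : ∀ w ∈ W, p w = c • w) : ker p = range (c • id - p) := by
  apply le_antisymm
  · intro x hx
    refine ⟨c⁻¹ • x, ?_⟩
    simp [mem_ker.mp hx, hc]
  · rintro _ ⟨x, rfl⟩
    simp [hp _ (hpW x)]

end Complement

theorem span_range_inter_eq_range {R M N : Type*} [Semiring R] [AddCommMonoid M] [Module R M]
    [AddCommMonoid N] [Module R N] {S : Set M} (hS : span R S = ⊤) {T : Set N}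
    {g : M →ₗ[R] N} (hg : MapsTo g S T) :
    span R (range g ∩ T) = range g := by
  refine le_antisymm (span_le.mpr inter_subset_left) ?_
  calc range g = span R (g '' S) := by rw [range_eq_map, ← hS, map_span]
    _ ≤ span R (range g ∩ T) := by
      refine span_mono ?_
      rintro _ ⟨x, hx, rfl⟩
      exact ⟨mem_range_self g x, hg hx⟩

end LinearMap

theorem stmt_10_general {V : Type*} [AddCommGroup V] [Module ℝ V]
    (H : Subgroup (V ≃ₗ[ℝ] V)) [Finite H]
    (L : AddSubgroup V)
    (hL : ∃ b : Module.Basis (Fin (Module.finrank ℝ V)) ℝ V,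
      AddSubgroup.closure (Set.range ⇑b) = L)
    (hLinv : ∀ h ∈ H, ⇑h '' (L : Set V) = L)
    (W : Submodule ℝ V)
    (hWinv : ∀ h ∈ H, ⇑h '' (W : Set V) = W)
    (hWgen : Submodule.span ℝ ((W : Set V) ∩ (L : Set V)) = W) :
    ∃ W' : Submodule ℝ V, IsCompl W W' ∧
      Submodule.span ℝ ((W' : Set V) ∩ (L : Set V)) = W' ∧
      ∀ h ∈ H, ⇑h '' (W' : Set V) = W' := by
  obtain ⟨b, hb⟩ := hL
  have := Fintype.ofFinite H
  have hLH : ∀ h ∈ H, MapsTo h L L := fun h hh => (mapsTo_image h L).mono_right (hLinv h hh).subset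
  have hWH : ∀ h ∈ H, MapsTo h W W := fun h hh => (mapsTo_image h W).mono_right (hWinv h hh).subset
  obtain ⟨q, hqW, hqid, hqL⟩ := exists_projection_mapsTo_lattice b hb hWgen
  set p := conjugateSum H q
  have hN : (Fintype.card H : ℝ) ≠ 0 := Nat.cast_ne_zero.mpr Fintype.card_ne_zero
  have hpW : ∀ x, p x ∈ W := fun x =>
    conjugateSum_mapsTo (T := W.toAddSubmonoid) (fun _ _ => mapsTo_univ _ _) hWH
      (fun x _ => hqW x) (mem_univ x)
  have hp : ∀ w ∈ W, p w = (Fintype.card H : ℝ) • w := fun w hw => by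
    rw [conjugateSum_apply_of_mem hWH hqid hw, Nat.cast_smul_eq_nsmul]
  have hpL : MapsTo p L L := conjugateSum_mapsTo (T := L.toAddSubmonoid) hLH hLH hqL
  refine ⟨LinearMap.ker p, LinearMap.isCompl_ker_of_apply_eq_smul hN hpW hp, ?_, ?_⟩
  · rw [LinearMap.ker_eq_range_smul_id_sub hN hpW hp]
    refine LinearMap.span_range_inter_eq_range (S := L) ?_ fun l hl => ?_
    · exact top_unique (b.span_eq ▸ span_mono (hb ▸ AddSubgroup.subset_closure))
    · simpa [Nat.cast_smul_eq_nsmul] using sub_mem (L.nsmul_mem hl _) (hpL hl)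
  · refine Subgroup.image_eq_of_forall_mapsTo fun h hh x hx => ?_
    have hpH : p (h x) = h (p x) := conjugateSum_apply_apply hh q x
    simp [hpH, LinearMap.mem_ker.mp hx]

/-- If H ⊆ GL(V) is a finite group, L an H-invariant full lattice, and W an
H-invariant L-generated subspace, then W has a complement W' that is both
L-generated and H-invariant. -/
theorem stmt_10 {V : Type*} [AddCommGroup V] [Module ℝ V] [FiniteDimensional ℝ V]
    (H : Subgroup (V ≃ₗ[ℝ] V)) [Finite H]
    (L : AddSubgroup V)
    (hL : ∃ b : Module.Basis (Fin (Module.finrank ℝ V)) ℝ V,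
      AddSubgroup.closure (Set.range ⇑b) = L)
    (hLinv : ∀ h ∈ H, ⇑h '' (L : Set V) = L)
    (W : Submodule ℝ V)
    (hWinv : ∀ h ∈ H, ⇑h '' (W : Set V) = W)
    (hWgen : Submodule.span ℝ ((W : Set V) ∩ (L : Set V)) = W) :
    ∃ W' : Submodule ℝ V, IsCompl W W' ∧
      Submodule.span ℝ ((W' : Set V) ∩ (L : Set V)) = W' ∧
      ∀ h ∈ H, ⇑h '' (W' : Set V) = W' :=
  stmt_10_general H L hL hLinv W hWinv hWgen
end

section
/- Let L be a full lattice in a finite-dimensional real vector space V, W ⊆ V a subspace, P: V → V/W the quotient map, 𝔏 the closure of P(L) in V/W, and K the connected component of 𝔏 containing 0. Then K is a vector subspace of V/W and the preimage Ŵ = P⁻¹(K) is an L-generated subspace of V containing W. -/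
/-!
The closure `G` of `P(L)` is a closed subgroup of `V/W`. Its lineality space `K`, the largest
subspace contained in `G`, is a neighbourhood of `0` in `G`: on a complement of `K` the group
`G` is discrete, since small nonzero elements of `G` there would accumulate in some unit
direction `x`, and multiples of them approximate every `t • x`, forcing `x ∈ K`. So `K` is
relatively open, closed and connected, hence the identity component of `G`, and the image of `L`
in `(V/W)/K` is discrete.
Rank–nullity over `ℤ` for `L → (V/W)/K`, together with the fact that a discrete subgroup has
`ℤ`-rank equal to the dimension of its real span, shows that `L ∩ P⁻¹(K)` spans `P⁻¹(K)`.
-/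

open Filter Topology Module Submodule
open scoped Pointwise

namespace AddSubgroup

variable {E : Type*}

def lineality [AddCommGroup E] [Module ℝ E] (G : AddSubgroup E) : Submodule ℝ E where
  carrier := {x | ∀ t : ℝ, t • x ∈ G}
  add_mem' hx hy t := by
    rw [smul_add]
    exact add_mem (hx t) (hy t)
  zero_mem' t := by
    rw [smul_zero]
    exact zero_mem G
  smul_mem' c x hx t := by
    rw [smul_smul]
    exact hx (t * c)

theorem coe_lineality_subset [AddCommGroup E] [Module ℝ E] (G : AddSubgroup E) :
    (G.lineality : Set E) ⊆ G :=
  fun x hx => by simpa using hx 1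

variable [NormedAddCommGroup E] [NormedSpace ℝ E] {G : AddSubgroup E}

theorem mem_lineality_of_mapClusterPt (hG : IsClosed (G : Set E)) {x : E}
    (hx : MapClusterPt x (𝓝[(G : Set E) \ {0}] 0) fun g => ‖g‖⁻¹ • g) :
    x ∈ G.lineality := by
  intro t
  rw [← SetLike.mem_coe, ← hG.closure_eq, Metric.mem_closure_iff]
  intro ε hε
  set δ := ε / (|t| + 1)
  have hδ : 0 < δ := by positivity
  obtain ⟨g, hdir, ⟨hgG, hg0⟩, hgδ⟩ :
      ∃ g, dist (‖g‖⁻¹ • g) x < δ ∧ g ∈ (G : Set E) \ {0} ∧ ‖g‖ < δ := by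
    have hsmall : ∀ᶠ g in 𝓝[(G : Set E) \ {0}] 0, g ∈ (G : Set E) \ {0} ∧ ‖g‖ < δ :=
      eventually_mem_nhdsWithin.and
        (by simpa using (eventually_norm_sub_lt (0 : E) hδ).filter_mono nhdsWithin_le_nhds)
    exact ((hx.frequently (Metric.ball_mem_nhds x hδ)).and_eventually hsmall).exists
  have hg : ‖g‖ ≠ 0 := norm_ne_zero_iff.mpr hg0
  -- `⌊t / ‖g‖⌋ • g` approximates `(t / ‖g‖) • g`, which is close to `t • x`
  refine ⟨⌊t / ‖g‖⌋ • g, zsmul_mem hgG _, ?_⟩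
  calc dist (t • x) (⌊t / ‖g‖⌋ • g)
      = ‖t • (x - ‖g‖⁻¹ • g) + Int.fract (t / ‖g‖) • g‖ := by
        rw [dist_eq_norm, ← Int.self_sub_floor, sub_smul, smul_sub, smul_smul,
          div_eq_mul_inv, Int.cast_smul_eq_zsmul]
        abel_nf
    _ ≤ |t| * dist (‖g‖⁻¹ • g) x + Int.fract (t / ‖g‖) * ‖g‖ := by
        refine (norm_add_le _ _).trans_eq ?_
        rw [norm_smul, norm_smul, Real.norm_eq_abs, Real.norm_of_nonneg (Int.fract_nonneg _),
          dist_comm, dist_eq_norm]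
    _ < |t| * δ + 1 * δ := by
        refine add_lt_add_of_le_of_lt (mul_le_mul_of_nonneg_left hdir.le (abs_nonneg t)) ?_
        exact mul_lt_mul'' (Int.fract_lt_one _) hgδ (Int.fract_nonneg _) (norm_nonneg g)
    _ = ε := by
        simp only [δ]
        field_simp

theorem eventually_eq_zero_of_disjoint_lineality [FiniteDimensional ℝ E]
    (hG : IsClosed (G : Set E)) {U : Submodule ℝ E} (hU : Disjoint U G.lineality) :
    ∀ᶠ g in 𝓝 (0 : E), g ∈ G → g ∈ U → g = 0 := by
  set S := ((G : Set E) ∩ U) \ {0}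
  by_contra h
  have hS : ∃ᶠ g in 𝓝 (0 : E), g ∈ S := by
    simpa [not_eventually, S, and_assoc] using h
  have hK : IsCompact (Metric.sphere (0 : E) 1 ∩ U) :=
    (isCompact_sphere 0 1).inter_right U.closed_of_finiteDimensional
  obtain ⟨x, ⟨hx1, hxU⟩, hx⟩ :=
    hK.exists_mapClusterPt_of_frequently (l := 𝓝[S] 0) (f := fun g => ‖g‖⁻¹ • g) <| by
      rw [nhdsWithin, frequently_inf_principal]
      refine hS.mono fun g hg => ⟨hg, ?_, U.smul_mem _ hg.1.2⟩
      simp [norm_smul, norm_ne_zero_iff.mpr hg.2]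
  have hxG : x ∈ G.lineality :=
    mem_lineality_of_mapClusterPt hG
      (hx.mono (nhdsWithin_mono _ (Set.sdiff_subset_sdiff_left Set.inter_subset_left)))
  have : x = 0 := Submodule.disjoint_def.mp hU x hxU hxG
  simp [this] at hx1

theorem lineality_mem_nhdsWithin [FiniteDimensional ℝ E] (hG : IsClosed (G : Set E)) :
    (G.lineality : Set E) ∈ 𝓝[G] 0 := by
  obtain ⟨U, hU⟩ := G.lineality.exists_isCompl
  set π := U.projection G.lineality hU.symm
  have hπ : Tendsto π (𝓝 0) (𝓝 0) := by
    simpa using (LinearMap.continuous_of_finiteDimensional π).tendsto 0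
  filter_upwards [self_mem_nhdsWithin, nhdsWithin_le_nhds
    (hπ.eventually (eventually_eq_zero_of_disjoint_lineality hG hU.symm.disjoint))] with g hgG hg
  have hπg : π g ∈ G := by
    simpa using sub_mem hgG (G.coe_lineality_subset (sub_projection_mem hU.symm g))
  exact (projection_apply_eq_zero_iff _).mp (hg hπg (projection_apply_mem _ _))

end AddSubgroup

section TopologicalAddGroup

variable {E : Type*} [TopologicalSpace E] [AddGroup E] [IsTopologicalAddGroup E]

theorem AddSubgroup.connectedComponentIn_eq_of_mem_nhdsWithin {G U : AddSubgroup E}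
    (hUG : U ≤ G) (hUc : IsClosed (U : Set E)) (hUp : IsPreconnected (U : Set E))
    (hU : (U : Set E) ∈ 𝓝[G] 0) :
    connectedComponentIn (G : Set E) 0 = U := by
  refine subset_antisymm ?_ (hUp.subset_connectedComponentIn U.zero_mem hUG)
  obtain ⟨O, hO, hO0, hOG⟩ := mem_nhdsWithin.mp hU
  have hUO : (U : Set E) ⊆ U + O := fun u hu => ⟨u, hu, 0, hO0, add_zero u⟩
  have hUOG : ((U : Set E) + O) ∩ G ⊆ U := by
    rintro _ ⟨⟨u, hu, o, ho, rfl⟩, hz⟩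
    have hoG : o ∈ G := by simpa using G.add_mem (G.neg_mem (hUG hu)) hz
    exact U.add_mem hu (hOG ⟨ho, hoG⟩)
  set C := connectedComponentIn (G : Set E) 0
  have hCG : C ⊆ G := connectedComponentIn_subset _ _
  have hcover : C ⊆ (U + O) ∪ (U : Set E)ᶜ := fun z _ => (em (z ∈ U)).imp (hUO ·) id
  have hdisj : C ∩ ((U + O) ∩ (U : Set E)ᶜ) = ∅ :=
    Set.eq_empty_of_forall_notMem fun z ⟨hz, hzO, hzU⟩ => hzU (hUOG ⟨hzO, hCG hz⟩)
  rcases isPreconnected_iff_subset_of_disjoint.mp isPreconnected_connectedComponentIn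
    _ _ hO.add_left hUc.isOpen_compl hcover hdisj with h | h
  · exact fun z hz => hUOG ⟨h hz, hCG hz⟩
  · exact absurd U.zero_mem (h (mem_connectedComponentIn G.zero_mem))

end TopologicalAddGroup

theorem Submodule.discreteTopology_map_mkQ {R E : Type*} [Ring R] [AddCommGroup E] [Module R E]
    [TopologicalSpace E] [IsTopologicalAddGroup E] {G : AddSubgroup E} {U : Submodule R E}
    (hUG : (U : Set E) ⊆ G) (hU : (U : Set E) ∈ 𝓝[G] 0) :
    DiscreteTopology (G.map U.mkQ.toAddMonoidHom) := by
  obtain ⟨O, hO, hO0, hOG⟩ := mem_nhdsWithin.mp hU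
  refine discreteTopology_iff_isOpen_singleton_zero.mpr ⟨U.mkQ '' O, U.isOpenMap_mkQ O hO, ?_⟩
  ext ⟨y, g, hg, rfl⟩
  simp only [Set.mem_preimage, Set.mem_image, Set.mem_singleton_iff]
  constructor
  · rintro ⟨o, ho, hog⟩
    have hoG : o ∈ G := by
      have : o - g ∈ U := (Submodule.Quotient.eq U).mp hog
      simpa using G.add_mem (hUG this) hg
    simpa [← hog] using hOG ⟨ho, hoG⟩
  · rintro h
    exact ⟨0, hO0, by simpa using congrArg Subtype.val h.symm⟩

section ZLattice

theorem finrank_span_eq_finrank_of_discreteTopology {E : Type*} [NormedAddCommGroup E]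
    [NormedSpace ℝ E] [FiniteDimensional ℝ E] (M : Submodule ℤ E) [DiscreteTopology M] :
    finrank ℝ (span ℝ (M : Set E)) = finrank ℤ M := by
  have := Real.finrank_eq_int_finrank_of_discrete (s := (M : Set E)) (by rwa [span_eq])
  rwa [Set.finrank, Set.finrank, span_eq] at this

variable {V F : Type*} [NormedAddCommGroup V] [NormedSpace ℝ V] [FiniteDimensional ℝ V]
  [NormedAddCommGroup F] [NormedSpace ℝ F] [FiniteDimensional ℝ F]

theorem LinearMap.span_ker_inter_eq_ker_of_discreteTopology_map (L : Submodule ℤ V)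
    [DiscreteTopology L] [IsZLattice ℝ L] (T : V →ₗ[ℝ] F)
    [DiscreteTopology (L.map (T.restrictScalars ℤ))] :
    span ℝ ((LinearMap.ker T : Set V) ∩ L) = LinearMap.ker T := by
  set N : Submodule ℤ V := L ⊓ (LinearMap.ker T).restrictScalars ℤ
  have hN : (N : Set V) = (LinearMap.ker T : Set V) ∩ L := Set.inter_comm _ _
  have : DiscreteTopology N := DiscreteTopology.of_subset (s := (L : Set V)) inferInstance
    Set.inter_subset_left
  set ψ := (T.restrictScalars ℤ).domRestrict L
  have hψ : finrank ℤ (L.map (T.restrictScalars ℤ)) + finrank ℤ N = finrank ℤ L := by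
    rw [← Submodule.finrank_quotient_add_finrank (LinearMap.ker ψ),
      ψ.quotKerEquivRange.finrank_eq, LinearMap.range_domRestrict, LinearMap.ker_domRestrict,
      ← (Submodule.comapSubtypeEquivOfLe (inf_le_left : N ≤ L)).finrank_eq,
      Submodule.comap_inf, comap_subtype_self, top_inf_eq]
    rfl
  have hrange :
      finrank ℤ (L.map (T.restrictScalars ℤ)) ≤ finrank ℝ (LinearMap.range T) := by
    rw [← finrank_span_eq_finrank_of_discreteTopology]
    refine Submodule.finrank_mono (span_le.mpr ?_)
    rintro _ ⟨v, -, rfl⟩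
    exact LinearMap.mem_range_self T v
  have hT := T.finrank_range_add_finrank_ker
  rw [ZLattice.rank ℝ L] at hψ
  refine eq_of_le_of_finrank_le (span_le.mpr Set.inter_subset_left) ?_
  rw [← hN, finrank_span_eq_finrank_of_discreteTopology]
  omega

end ZLattice

/-- Construction of the L-closure: with P : V → V/W the quotient map, 𝔏 the closure of
P(L), and K the identity component of 𝔏, K is a vector subspace of V/W and
Ŵ = P⁻¹(K) is an L-generated subspace of V containing W. -/
theorem stmt_12 {V : Type*} [NormedAddCommGroup V] [NormedSpace ℝ V]
    [FiniteDimensional ℝ V] (L : AddSubgroup V)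
    (hL : ∃ b : Module.Basis (Fin (Module.finrank ℝ V)) ℝ V,
      AddSubgroup.closure (Set.range ⇑b) = L)
    (W : Submodule ℝ V) :
    ∃ K : Submodule ℝ (V ⧸ W),
      (K : Set (V ⧸ W)) = connectedComponentIn (closure (⇑W.mkQ '' (L : Set V))) 0 ∧
      ∃ What : Submodule ℝ V,
        (What : Set V) = ⇑W.mkQ ⁻¹' (K : Set (V ⧸ W)) ∧
        Submodule.span ℝ ((What : Set V) ∩ (L : Set V)) = What ∧
        W ≤ What := by
  obtain ⟨b, rfl⟩ := hL
  set Λ := span ℤ (Set.range b)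
  have hΛ : (AddSubgroup.closure (Set.range b) : Set V) = Λ := by
    rw [← span_int_eq_addSubgroupClosure]; rfl
  -- makes `V ⧸ W` a normed space
  have : IsClosed (W : Set V) := W.closed_of_finiteDimensional
  set G := (Λ.toAddSubgroup.map W.mkQ.toAddMonoidHom).topologicalClosure
  have hG : (G : Set (V ⧸ W)) = closure (W.mkQ '' Λ) := AddSubgroup.topologicalClosure_coe
  set K := G.lineality
  have hKG : (K : Set (V ⧸ W)) ⊆ G := G.coe_lineality_subset
  have hKnhds : (K : Set (V ⧸ W)) ∈ 𝓝[G] 0 :=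
    G.lineality_mem_nhdsWithin (AddSubgroup.isClosed_topologicalClosure _)
  have hKc : IsClosed (K : Set (V ⧸ W)) := K.closed_of_finiteDimensional
  refine ⟨K, ?_, K.comap W.mkQ, rfl, ?_, W.le_comap_mkQ K⟩
  · rw [hΛ, ← hG]
    exact (AddSubgroup.connectedComponentIn_eq_of_mem_nhdsWithin (U := K.toAddSubgroup) hKG
      hKc K.convex.isPreconnected hKnhds).symm
  · have hker : K.comap W.mkQ = LinearMap.ker (K.mkQ ∘ₗ W.mkQ) := by
      rw [LinearMap.ker_comp, ker_mkQ]
    have : DiscreteTopology (Λ.map ((K.mkQ ∘ₗ W.mkQ).restrictScalars ℤ)) := by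
      refine DiscreteTopology.of_subset (Submodule.discreteTopology_map_mkQ hKG hKnhds) ?_
      rintro _ ⟨v, hv, rfl⟩
      exact ⟨W.mkQ v, subset_closure ⟨v, hv, rfl⟩, rfl⟩
    rw [hΛ, hker]
    exact LinearMap.span_ker_inter_eq_ker_of_discreteTopology_map Λ _
end

section
/- Let π ⊆ Iso(ℝⁿ) be a torsion-free group of isometries acting freely, and let (A, v) ∈ π with A ≠ Id of finite order k. Then the vector u = (Id + A + ⋯ + A^{k−1})v is nonzero and lies in ker(A − Id); in particular ker(A − Id) ≠ {0}. -/
/-- If π ⊆ Iso(ℝⁿ) (realized as pairs (A,v) acting by x ↦ Ax + v) is a group of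
isometries acting freely (equivalently, torsion-free), and (A, v) ∈ π with A ≠ Id of
order k, then u = (Id + A + ⋯ + A^{k−1})v is nonzero and fixed by A; in particular
ker(A − Id) ≠ {0}. -/
theorem stmt_17 {n : ℕ}
    (π : Set ((EuclideanSpace ℝ (Fin n) ≃ₗᵢ[ℝ] EuclideanSpace ℝ (Fin n)) ×
      EuclideanSpace ℝ (Fin n)))
    (hone : (1, 0) ∈ π)
    (hmul : ∀ p ∈ π, ∀ q ∈ π, (p.1 * q.1, p.1 q.2 + p.2) ∈ π)
    (hinv : ∀ p ∈ π, (p.1⁻¹, -(p.1⁻¹ p.2)) ∈ π)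
    (hfree : ∀ p ∈ π, (∃ x, p.1 x + p.2 = x) → p = (1, 0))
    {A : EuclideanSpace ℝ (Fin n) ≃ₗᵢ[ℝ] EuclideanSpace ℝ (Fin n)}
    {v : EuclideanSpace ℝ (Fin n)}
    (hmem : (A, v) ∈ π) (hA : A ≠ 1) {k : ℕ} (hk : orderOf A = k) (hkpos : 0 < k) :
    (∑ i ∈ Finset.range k, A.toLinearMap ^ i) v ≠ 0 ∧
      A ((∑ i ∈ Finset.range k, A.toLinearMap ^ i) v) =
        (∑ i ∈ Finset.range k, A.toLinearMap ^ i) v := by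
  set L := A.toLinearMap with hL
  have hLA : ∀ x, L x = A x := fun x => rfl
  have hpow : ∀ (m : ℕ) (x), (L ^ m) x = (A ^ m) x := by
    intro m
    induction m with
    | zero => intro x; simp
    | succ m ih =>
      intro x
      rw [pow_succ, pow_succ, Module.End.mul_apply, ih]
      rfl
  have hAk : A ^ k = 1 := by rw [← hk]; exact pow_orderOf_eq_one A
  have hLk : ∀ x, (L ^ k) x = x := by
    intro x; rw [hpow, hAk]; rfl
  -- step lemma: applying A to S v shifts the sum by one
  have hsa : ∀ (m : ℕ), (∑ i ∈ Finset.range m, L ^ i) v = ∑ i ∈ Finset.range m, (L ^ i) v :=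
    fun m => by rw [LinearMap.sum_apply]
  have hshift : ∀ m : ℕ, A ((∑ i ∈ Finset.range m, L ^ i) v) + v
      = (∑ i ∈ Finset.range (m + 1), L ^ i) v := by
    intro m
    rw [hsa, hsa, ← hLA, map_sum, Finset.sum_range_succ']
    congr 1
    exact Finset.sum_congr rfl fun i _ => by rw [pow_succ', Module.End.mul_apply]
  have hfix : A ((∑ i ∈ Finset.range k, L ^ i) v) = (∑ i ∈ Finset.range k, L ^ i) v := by
    have h1 := hshift k
    rw [Finset.sum_range_succ, LinearMap.add_apply, hLk] at h1
    exact add_right_cancel h1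
  refine ⟨?_, hfix⟩
  intro hu
  -- the fixed point
  set w : ℕ → EuclideanSpace ℝ (Fin n) := fun i => (∑ j ∈ Finset.range i, L ^ j) v with hw
  set x : EuclideanSpace ℝ (Fin n) := (k : ℝ)⁻¹ • ∑ i ∈ Finset.range k, w i with hx
  have hk0 : (k : ℝ) ≠ 0 := Nat.cast_ne_zero.mpr hkpos.ne'
  have hwsum : ∑ i ∈ Finset.range k, w (i + 1) = ∑ i ∈ Finset.range k, w i := by
    have h1 : ∑ i ∈ Finset.range (k + 1), w i
        = (∑ i ∈ Finset.range k, w (i + 1)) + w 0 := Finset.sum_range_succ' w k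
    rw [Finset.sum_range_succ] at h1
    have hw0 : w 0 = 0 := by simp [hw]
    have hwk : w k = 0 := hu
    rw [hw0, hwk, add_zero, add_zero] at h1
    exact h1.symm
  have hfixpt : A x + v = x := by
    have hcalc : A x + v = (k : ℝ)⁻¹ • ∑ i ∈ Finset.range k, (A (w i) + v) := by
      rw [Finset.sum_add_distrib, smul_add, hx, map_smul, map_sum]
      congr 1
      rw [Finset.sum_const, Finset.card_range, ← Nat.cast_smul_eq_nsmul ℝ, smul_smul,
        inv_mul_cancel₀ hk0, one_smul]
    rw [hcalc]
    have : ∀ i, A (w i) + v = w (i + 1) := fun i => hshift i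
    simp only [this]
    rw [hwsum, hx]
  have := hfree (A, v) hmem ⟨x, hfixpt⟩
  exact hA (congrArg Prod.fst this)
end

section
/- Let π ⊆ Iso(ℝⁿ) be a crystallographic group with lattice L_π and holonomy H_π, and let W ⊆ ℝⁿ be an H_π-invariant, L_π-generated subspace. Then the map sending (A, v) ∈ π to (A|_{W⊥}, P_{W⊥}(v)) ∈ Iso(W⊥) is a group homomorphism, and its image is a discrete subgroup of Iso(W⊥) whose action on W⊥ is cocompact. -/
/-- The restriction-projection homomorphism: for a pair p = (A, v) in
Iso(ℝⁿ) = O(n) ⋉ ℝⁿ and a subspace W, this is the continuous linear map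
P_{W⊥} ∘ A ∘ incl : W⊥ → W⊥, which equals the restriction A|_{W⊥} when A
preserves W⊥. -/
noncomputable def restrPerp {n : ℕ} (W : Submodule ℝ (EuclideanSpace ℝ (Fin n)))
    (p : (EuclideanSpace ℝ (Fin n) ≃ₗᵢ[ℝ] EuclideanSpace ℝ (Fin n)) ×
      EuclideanSpace ℝ (Fin n)) : Wᗮ →L[ℝ] Wᗮ :=
  (Submodule.orthogonalProjectionOnto Wᗮ).comp
    ((p.1.toLinearIsometry.toContinuousLinearMap).comp Wᗮ.subtypeL)

/-!
Elements of `π` preserve `W`, hence `W⊥`, so the orthogonal projection onto `W⊥` intertwines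
their affine actions on `ℝⁿ` and on `W⊥`; this gives the homomorphism, and cocompactness passes
to the projection of a compact fundamental set. For discreteness, the linear parts take only
finitely many values, and the translation parts lie in finitely many cosets of `L_π`. Since `W`
is spanned by lattice vectors, every point of `W` lies within bounded distance of `L_π ∩ W`, so
a lattice vector with bounded projection can be moved by an element of `L_π ∩ W` into a bounded
set; hence the projection of `L_π` meets each bounded subset of `W⊥` in finitely many points.
-/

open Set Bornology Submodule
open scoped Pointwise

def BoundedlyFinite {X : Type*} [Bornology X] (S : Set X) : Prop :=
  ∀ s, IsBounded s → (s ∩ S).Finite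

namespace BoundedlyFinite

variable {X Y : Type*}

theorem mono [Bornology X] {S T : Set X} (hS : BoundedlyFinite S) (hTS : T ⊆ S) :
    BoundedlyFinite T :=
  fun s hs => (hS s hs).subset (inter_subset_inter_right s hTS)

theorem biUnion [Bornology X] {ι : Type*} {I : Set ι} {S : ι → Set X} (hI : I.Finite)
    (hS : ∀ i ∈ I, BoundedlyFinite (S i)) : BoundedlyFinite (⋃ i ∈ I, S i) := fun s hs => by
  rw [inter_iUnion₂]
  exact hI.biUnion fun i hi => hS i hi s hs

theorem vadd [SeminormedAddCommGroup X] {S : Set X} (hS : BoundedlyFinite S) (c : X) :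
    BoundedlyFinite (c +ᵥ S) := fun s hs => by
  refine ((hS _ (hs.vadd (-c))).image (c +ᵥ ·)).subset ?_
  rintro _ ⟨hx, y, hy, rfl⟩
  exact ⟨y, ⟨⟨c +ᵥ y, hx, neg_vadd_vadd c y⟩, hy⟩, rfl⟩

theorem finite_prod [Bornology X] [Bornology Y] {F : Set X} {T : Set Y} (hF : F.Finite)
    (hT : BoundedlyFinite T) : BoundedlyFinite (F ×ˢ T) := fun _ hs =>
  (hF.prod (hT _ hs.image_snd)).subset fun _ ⟨hz, hzF, hzT⟩ => ⟨hzF, mem_image_of_mem _ hz, hzT⟩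

theorem discreteTopology [MetricSpace X] {S : Set X} (hS : BoundedlyFinite S) :
    DiscreteTopology S := by
  rw [← isDiscrete_iff_discreteTopology, isDiscrete_iff_nhdsWithin]
  intro x hx
  have hball := (hS _ (Metric.isBounded_ball (x := x) (r := 1))).isDiscrete
  rw [nhdsWithin_restrict' S (Metric.ball_mem_nhds x one_pos), inter_comm]
  exact isDiscrete_iff_nhdsWithin.1 hball x ⟨Metric.mem_ball_self one_pos, hx⟩

end BoundedlyFinite

section NormedSpace

variable {E : Type*} [NormedAddCommGroup E] [NormedSpace ℝ E]

theorem boundedlyFinite_closure_range_basis [FiniteDimensional ℝ E] {ι : Type*} [Finite ι]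
    (b : Module.Basis ι ℝ E) : BoundedlyFinite (AddSubgroup.closure (range b) : Set E) :=
  fun _ hs => by simpa [← span_int_eq_addSubgroupClosure] using ZSpan.setFinite_inter b hs

theorem exists_mem_span_int_norm_sub_le (t : Finset E) {w : E} (hw : w ∈ span ℝ (t : Set E)) :
    ∃ u ∈ span ℤ (t : Set E), ‖w - u‖ ≤ ∑ x ∈ t, ‖x‖ := by
  obtain ⟨f, -, rfl⟩ := mem_span_finset.1 hw
  refine ⟨∑ x ∈ t, ⌊f x⌋ • x, sum_mem fun x hx => zsmul_mem (subset_span hx) _, ?_⟩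
  have hfract : ∑ x ∈ t, f x • x - ∑ x ∈ t, ⌊f x⌋ • x = ∑ x ∈ t, Int.fract (f x) • x := by
    simp only [← Finset.sum_sub_distrib, Int.fract, sub_smul, Int.cast_smul_eq_zsmul]
  rw [hfract]
  refine (norm_sum_le _ _).trans (Finset.sum_le_sum fun x _ => ?_)
  rw [norm_smul, Real.norm_of_nonneg (Int.fract_nonneg _)]
  exact mul_le_of_le_one_left (norm_nonneg x) (Int.fract_lt_one _).le

theorem mk_one_sub_mem {π : Set ((E ≃ₗᵢ[ℝ] E) × E)}
    (hmul : ∀ p ∈ π, ∀ q ∈ π, (p.1 * q.1, p.1 q.2 + p.2) ∈ π)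
    (hinv : ∀ p ∈ π, (p.1⁻¹, -(p.1⁻¹ p.2)) ∈ π) {A : E ≃ₗᵢ[ℝ] E} {v w : E}
    (hv : (A, v) ∈ π) (hw : (A, w) ∈ π) : ((1 : E ≃ₗᵢ[ℝ] E), v - w) ∈ π := by
  convert hmul _ hv _ (hinv _ hw) using 2 <;> simp [sub_eq_neg_add]

theorem exists_finite_image_snd_subset_biUnion_vadd {π : Set ((E ≃ₗᵢ[ℝ] E) × E)}
    (hmul : ∀ p ∈ π, ∀ q ∈ π, (p.1 * q.1, p.1 q.2 + p.2) ∈ π)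
    (hinv : ∀ p ∈ π, (p.1⁻¹, -(p.1⁻¹ p.2)) ∈ π)
    (hHfin : {A : E ≃ₗᵢ[ℝ] E | ∃ v, (A, v) ∈ π}.Finite) :
    ∃ V : Set E, V.Finite ∧ Prod.snd '' π ⊆ ⋃ v ∈ V, v +ᵥ {u | (1, u) ∈ π} := by
  choose! w hw using fun (A : E ≃ₗᵢ[ℝ] E) (hA : ∃ v, (A, v) ∈ π) => hA
  refine ⟨w '' {A | ∃ v, (A, v) ∈ π}, hHfin.image w, ?_⟩
  rintro _ ⟨p, hp, rfl⟩
  have hpA : ∃ v, (p.1, v) ∈ π := ⟨p.2, hp⟩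
  refine mem_biUnion (mem_image_of_mem w hpA) ⟨p.2 - w p.1, ?_, add_sub_cancel _ _⟩
  exact mk_one_sub_mem hmul hinv hp (hw p.1 hpA)

end NormedSpace

section InnerProductSpace

variable {E : Type*} [NormedAddCommGroup E] [InnerProductSpace ℝ E]

theorem orthogonalProjectionOnto_orthogonal_apply_eq_of_mapsTo {K : Submodule ℝ E}
    [K.HasOrthogonalProjection] {F : Type*} [FunLike F E E] [LinearMapClass F ℝ E E] {f : F}
    (hf : MapsTo f K K) (x : E) :
    Kᗮ.orthogonalProjectionOnto (f x) = Kᗮ.orthogonalProjectionOnto (f (Kᗮ.starProjection x)) := by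
  have hx : x - Kᗮ.starProjection x ∈ K := by
    simpa only [orthogonal_orthogonal] using Kᗮ.sub_starProjection_mem_orthogonal x
  conv_lhs => rw [← sub_add_cancel x (Kᗮ.starProjection x)]
  rw [map_add, map_add, orthogonalProjectionOnto_orthogonal_apply_eq_zero (hf hx), zero_add]

theorem boundedlyFinite_orthogonalProjectionOnto_image {L : AddSubgroup E}
    (hL : BoundedlyFinite (L : Set E)) {K : Submodule ℝ E} [FiniteDimensional ℝ K]
    (hK : span ℝ ((K : Set E) ∩ L) = K) :
    BoundedlyFinite (Kᗮ.orthogonalProjectionOnto '' (L : Set E)) := by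
  have : Module.Finite ℝ (span ℝ ((K : Set E) ∩ L)) := by rwa [hK]
  obtain ⟨t, htKL, -, ht, -⟩ := exists_finset_span_eq_linearIndepOn ℝ ((K : Set E) ∩ L)
  have htL : span ℤ (t : Set E) ≤ L.toIntSubmodule :=
    span_le.2 fun x hx => (htKL hx).2
  intro s hs
  set R := ∑ x ∈ t, ‖x‖
  have hbdd : IsBounded (Metric.closedBall (0 : E) R + (↑) '' s) :=
    isBounded_add Metric.isBounded_closedBall (isometry_subtype_coe.lipschitz.isBounded_image hs)
  refine ((hL _ hbdd).image Kᗮ.orthogonalProjectionOnto).subset ?_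
  rintro x ⟨hxs, v, hvL, rfl⟩
  have hvK : v - Kᗮ.starProjection v ∈ span ℝ (t : Set E) := by
    simpa only [ht, hK, orthogonal_orthogonal] using Kᗮ.sub_starProjection_mem_orthogonal v
  obtain ⟨u, hut, hu⟩ := exists_mem_span_int_norm_sub_le t hvK
  have huK : u ∈ K := by
    rw [← hK, ← ht]
    exact span_le_restrictScalars ℤ ℝ _ hut
  refine ⟨v - u, ⟨?_, L.sub_mem hvL (htL hut)⟩, ?_⟩
  · refine ⟨v - Kᗮ.starProjection v - u, by simpa using hu, _, mem_image_of_mem _ hxs, ?_⟩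
    simp only [starProjection_apply]
    abel
  · rw [map_sub, orthogonalProjectionOnto_orthogonal_apply_eq_zero huK, sub_zero]

theorem boundedlyFinite_orthogonalProjectionOnto_translations {π : Set ((E ≃ₗᵢ[ℝ] E) × E)}
    (hmul : ∀ p ∈ π, ∀ q ∈ π, (p.1 * q.1, p.1 q.2 + p.2) ∈ π)
    (hinv : ∀ p ∈ π, (p.1⁻¹, -(p.1⁻¹ p.2)) ∈ π)
    (hHfin : {A : E ≃ₗᵢ[ℝ] E | ∃ v, (A, v) ∈ π}.Finite) {L : AddSubgroup E}
    (hL : BoundedlyFinite (L : Set E)) (hLπ : (L : Set E) = {v | (1, v) ∈ π})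
    {K : Submodule ℝ E} [FiniteDimensional ℝ K] (hK : span ℝ ((K : Set E) ∩ L) = K) :
    BoundedlyFinite (Kᗮ.orthogonalProjectionOnto '' (Prod.snd '' π)) := by
  obtain ⟨V, hV, hπV⟩ := exists_finite_image_snd_subset_biUnion_vadd hmul hinv hHfin
  rw [← hLπ] at hπV
  refine (BoundedlyFinite.biUnion (hV.image Kᗮ.orthogonalProjectionOnto) fun x _ =>
    (boundedlyFinite_orthogonalProjectionOnto_image hL hK).vadd x).mono ?_
  rintro _ ⟨_, hv, rfl⟩
  obtain ⟨v, hvV, u, huL, rfl⟩ := mem_iUnion₂.1 (hπV hv)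
  exact mem_biUnion (mem_image_of_mem _ hvV) ⟨_, mem_image_of_mem _ huL, (map_add _ v u).symm⟩

end InnerProductSpace

section RestrPerp

variable {n : ℕ} {W : Submodule ℝ (EuclideanSpace ℝ (Fin n))}

theorem restrPerp_mul {p q : (EuclideanSpace ℝ (Fin n) ≃ₗᵢ[ℝ] EuclideanSpace ℝ (Fin n)) ×
      EuclideanSpace ℝ (Fin n)} (hp : MapsTo p.1 W W) (v : EuclideanSpace ℝ (Fin n)) :
    restrPerp W (p.1 * q.1, v) = (restrPerp W p).comp (restrPerp W q) := by
  refine ContinuousLinearMap.ext fun x => ?_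
  exact orthogonalProjectionOnto_orthogonal_apply_eq_of_mapsTo hp (q.1 x)

theorem orthogonalProjectionOnto_orthogonal_apply_add
    {p : (EuclideanSpace ℝ (Fin n) ≃ₗᵢ[ℝ] EuclideanSpace ℝ (Fin n)) × EuclideanSpace ℝ (Fin n)}
    (hp : MapsTo p.1 W W) (v : EuclideanSpace ℝ (Fin n)) :
    Wᗮ.orthogonalProjectionOnto (p.1 v + p.2) =
      restrPerp W p (Wᗮ.orthogonalProjectionOnto v) + Wᗮ.orthogonalProjectionOnto p.2 := by
  rw [map_add]
  congr 1
  exact orthogonalProjectionOnto_orthogonal_apply_eq_of_mapsTo hp v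

theorem restrPerp_apply_add
    (p : (EuclideanSpace ℝ (Fin n) ≃ₗᵢ[ℝ] EuclideanSpace ℝ (Fin n)) × EuclideanSpace ℝ (Fin n))
    (x : Wᗮ) :
    restrPerp W p x + Wᗮ.orthogonalProjectionOnto p.2 =
      Wᗮ.orthogonalProjectionOnto (p.1 x + p.2) := by
  rw [map_add]
  rfl

theorem discreteTopology_restrPerp_image
    {π : Set ((EuclideanSpace ℝ (Fin n) ≃ₗᵢ[ℝ] EuclideanSpace ℝ (Fin n)) ×
      EuclideanSpace ℝ (Fin n))}
    (hmul : ∀ p ∈ π, ∀ q ∈ π, (p.1 * q.1, p.1 q.2 + p.2) ∈ π)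
    (hinv : ∀ p ∈ π, (p.1⁻¹, -(p.1⁻¹ p.2)) ∈ π)
    (hHfin : {A : EuclideanSpace ℝ (Fin n) ≃ₗᵢ[ℝ] EuclideanSpace ℝ (Fin n) |
      ∃ v, (A, v) ∈ π}.Finite)
    {L : AddSubgroup (EuclideanSpace ℝ (Fin n))}
    (hL : BoundedlyFinite (L : Set (EuclideanSpace ℝ (Fin n))))
    (hLπ : (L : Set (EuclideanSpace ℝ (Fin n))) = {v | (1, v) ∈ π})
    (hW : span ℝ ((W : Set (EuclideanSpace ℝ (Fin n))) ∩ L) = W) :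
    DiscreteTopology {y : (Wᗮ →L[ℝ] Wᗮ) × Wᗮ |
      ∃ p ∈ π, y = (restrPerp W p, Wᗮ.orthogonalProjectionOnto p.2)} := by
  have hT := boundedlyFinite_orthogonalProjectionOnto_translations hmul hinv hHfin hL hLπ hW
  have himage : BoundedlyFinite {y : (Wᗮ →L[ℝ] Wᗮ) × Wᗮ |
      ∃ p ∈ π, y = (restrPerp W p, Wᗮ.orthogonalProjectionOnto p.2)} := by
    refine (hT.finite_prod (hHfin.image fun A => restrPerp W (A, 0))).mono ?_
    rintro _ ⟨p, hp, rfl⟩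
    exact ⟨⟨p.1, ⟨p.2, hp⟩, rfl⟩, mem_image_of_mem _ (mem_image_of_mem _ hp)⟩
  -- `Prod.instBornology` agrees with the bornology of the product metric only up to unfolding
  exact BoundedlyFinite.discreteTopology (X := (Wᗮ →L[ℝ] Wᗮ) × Wᗮ) (by exact himage)

end RestrPerp

theorem stmt_19_general {n : ℕ}
    (π : Set ((EuclideanSpace ℝ (Fin n) ≃ₗᵢ[ℝ] EuclideanSpace ℝ (Fin n)) ×
      EuclideanSpace ℝ (Fin n)))
    (hmul : ∀ p ∈ π, ∀ q ∈ π, (p.1 * q.1, p.1 q.2 + p.2) ∈ π)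
    (hinv : ∀ p ∈ π, (p.1⁻¹, -(p.1⁻¹ p.2)) ∈ π)
    (hcocompact : ∃ C : Set (EuclideanSpace ℝ (Fin n)), IsCompact C ∧
      ∀ x : EuclideanSpace ℝ (Fin n), ∃ p ∈ π, p.1 x + p.2 ∈ C)
    (hHfin : Set.Finite
      {A : EuclideanSpace ℝ (Fin n) ≃ₗᵢ[ℝ] EuclideanSpace ℝ (Fin n) | ∃ v, (A, v) ∈ π})
    (hLlat : ∃ b : Module.Basis (Fin n) ℝ (EuclideanSpace ℝ (Fin n)),
      ((AddSubgroup.closure (Set.range ⇑b) : AddSubgroup (EuclideanSpace ℝ (Fin n))) :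
        Set (EuclideanSpace ℝ (Fin n))) = {v | (1, v) ∈ π})
    (W : Submodule ℝ (EuclideanSpace ℝ (Fin n)))
    (hWinv : ∀ p ∈ π, ⇑p.1 '' (W : Set (EuclideanSpace ℝ (Fin n))) = W)
    (hWgen : Submodule.span ℝ
      ((W : Set (EuclideanSpace ℝ (Fin n))) ∩ {v | (1, v) ∈ π}) = W) :
    -- (A,v) ↦ (A|_{W⊥}, P_{W⊥}(v)) is a group homomorphism:
    (∀ p ∈ π, ∀ q ∈ π,
      restrPerp W (p.1 * q.1, p.1 q.2 + p.2) = (restrPerp W p).comp (restrPerp W q) ∧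
      Submodule.orthogonalProjectionOnto Wᗮ (p.1 q.2 + p.2) =
        restrPerp W p (Submodule.orthogonalProjectionOnto Wᗮ q.2) + Submodule.orthogonalProjectionOnto Wᗮ p.2) ∧
    -- its image is a discrete subgroup of Iso(W⊥):
    DiscreteTopology
      {y : (Wᗮ →L[ℝ] Wᗮ) × Wᗮ |
        ∃ p ∈ π, y = (restrPerp W p, Submodule.orthogonalProjectionOnto Wᗮ p.2)} ∧
    -- and its action on W⊥ is cocompact:
    (∃ C : Set Wᗮ, IsCompact C ∧
      ∀ x : Wᗮ, ∃ p ∈ π, restrPerp W p x + Submodule.orthogonalProjectionOnto Wᗮ p.2 ∈ C) := by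
  have hWmaps : ∀ p ∈ π, MapsTo p.1 W W := fun p hp => mapsTo_iff_image_subset.2 (hWinv p hp).le
  refine ⟨fun p hp q _ => ⟨restrPerp_mul (hWmaps p hp) _,
    orthogonalProjectionOnto_orthogonal_apply_add (hWmaps p hp) q.2⟩, ?_, ?_⟩
  · obtain ⟨b, hb⟩ := hLlat
    rw [← hb] at hWgen
    exact discreteTopology_restrPerp_image hmul hinv hHfin (boundedlyFinite_closure_range_basis b)
      hb hWgen
  · obtain ⟨C, hC, hCπ⟩ := hcocompact
    refine ⟨Wᗮ.orthogonalProjectionOnto '' C, hC.image (map_continuous _), fun x => ?_⟩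
    obtain ⟨p, hp, hpx⟩ := hCπ x
    exact ⟨p, hp, restrPerp_apply_add p x ▸ mem_image_of_mem _ hpx⟩

/-- Let π ⊆ Iso(ℝⁿ) be a crystallographic group (realized as a set of pairs (A,v)
acting by x ↦ Ax + v: a group, with discrete image in (ℝⁿ →L ℝⁿ) × ℝⁿ, cocompact
action, finite holonomy H_π, and translation lattice L_π = {v : (Id,v) ∈ π} a full
lattice), and let W be an H_π-invariant, L_π-generated subspace. Then
(A, v) ↦ (A|_{W⊥}, P_{W⊥}(v)) is a group homomorphism into Iso(W⊥), its image is
discrete, and its action on W⊥ is cocompact. -/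
theorem stmt_19 {n : ℕ}
    (π : Set ((EuclideanSpace ℝ (Fin n) ≃ₗᵢ[ℝ] EuclideanSpace ℝ (Fin n)) ×
      EuclideanSpace ℝ (Fin n)))
    (hone : (1, 0) ∈ π)
    (hmul : ∀ p ∈ π, ∀ q ∈ π, (p.1 * q.1, p.1 q.2 + p.2) ∈ π)
    (hinv : ∀ p ∈ π, (p.1⁻¹, -(p.1⁻¹ p.2)) ∈ π)
    (hdisc : DiscreteTopology
      {y : (EuclideanSpace ℝ (Fin n) →L[ℝ] EuclideanSpace ℝ (Fin n)) ×
          EuclideanSpace ℝ (Fin n) |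
        ∃ p ∈ π, y = (p.1.toLinearIsometry.toContinuousLinearMap, p.2)})
    (hcocompact : ∃ C : Set (EuclideanSpace ℝ (Fin n)), IsCompact C ∧
      ∀ x : EuclideanSpace ℝ (Fin n), ∃ p ∈ π, p.1 x + p.2 ∈ C)
    (hHfin : Set.Finite
      {A : EuclideanSpace ℝ (Fin n) ≃ₗᵢ[ℝ] EuclideanSpace ℝ (Fin n) | ∃ v, (A, v) ∈ π})
    (hLlat : ∃ b : Module.Basis (Fin n) ℝ (EuclideanSpace ℝ (Fin n)),
      ((AddSubgroup.closure (Set.range ⇑b) : AddSubgroup (EuclideanSpace ℝ (Fin n))) :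
        Set (EuclideanSpace ℝ (Fin n))) = {v | (1, v) ∈ π})
    (W : Submodule ℝ (EuclideanSpace ℝ (Fin n)))
    (hWinv : ∀ p ∈ π, ⇑p.1 '' (W : Set (EuclideanSpace ℝ (Fin n))) = W)
    (hWgen : Submodule.span ℝ
      ((W : Set (EuclideanSpace ℝ (Fin n))) ∩ {v | (1, v) ∈ π}) = W) :
    -- (A,v) ↦ (A|_{W⊥}, P_{W⊥}(v)) is a group homomorphism:
    (∀ p ∈ π, ∀ q ∈ π,
      restrPerp W (p.1 * q.1, p.1 q.2 + p.2) = (restrPerp W p).comp (restrPerp W q) ∧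
      Submodule.orthogonalProjectionOnto Wᗮ (p.1 q.2 + p.2) =
        restrPerp W p (Submodule.orthogonalProjectionOnto Wᗮ q.2) + Submodule.orthogonalProjectionOnto Wᗮ p.2) ∧
    -- its image is a discrete subgroup of Iso(W⊥):
    DiscreteTopology
      {y : (Wᗮ →L[ℝ] Wᗮ) × Wᗮ |
        ∃ p ∈ π, y = (restrPerp W p, Submodule.orthogonalProjectionOnto Wᗮ p.2)} ∧
    -- and its action on W⊥ is cocompact:
    (∃ C : Set Wᗮ, IsCompact C ∧
      ∀ x : Wᗮ, ∃ p ∈ π, restrPerp W p x + Submodule.orthogonalProjectionOnto Wᗮ p.2 ∈ C) :=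
  stmt_19_general π hmul hinv hcocompact hHfin hLlat W hWinv hWgen
end
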